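/- Let f(x,y) = x + (1/m) x^m y^m + (2a/(m+1)) x^{m+1} y^{m+1} + (1/(m+2)) x^{m+2} y^{m+2} with m ≥ 2 an integer and a ∈ ℝ. Then f has no critical points on ℝ²; in particular the set of critical values Σ_f is empty. -/
import Mathlib


/-- `f(x,y) = x + (1/m)xᵐyᵐ + (2a/(m+1))x^{m+1}y^{m+1} + (1/(m+2))x^{m+2}y^{m+2}`
(with `m ≥ 2`) has no critical points on `ℝ²`, and its set of critical values is empty. -/
theorem stmt2 (m : ℕ) (hm : 2 ≤ m) (a : ℝ) (f : ℝ → ℝ → ℝ)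
    (hf : ∀ x y : ℝ, f x y =
      x + (1 / (m : ℝ)) * x ^ m * y ^ m + (2 * a / ((m : ℝ) + 1)) * x ^ (m + 1) * y ^ (m + 1)
        + (1 / ((m : ℝ) + 2)) * x ^ (m + 2) * y ^ (m + 2)) :
    (∀ x y : ℝ, ¬ (deriv (fun t => f t y) x = 0 ∧ deriv (fun t => f x t) y = 0)) ∧
    {c : ℝ | ∃ x y : ℝ,
        deriv (fun t => f t y) x = 0 ∧ deriv (fun t => f x t) y = 0 ∧ f x y = c} = ∅ := by
  obtain ⟨n, rfl⟩ : ∃ n, m = n + 2 := ⟨m - 2, by omega⟩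
  set M : ℝ := ((n : ℝ) + 2) with hM
  have hM0 : M ≠ 0 := by positivity
  have hM1 : M + 1 ≠ 0 := by positivity
  have hM2 : M + 2 ≠ 0 := by positivity
  have hcast : ((n + 2 : ℕ) : ℝ) = M := by push_cast [hM]; ring
  have key : ∀ x y : ℝ, ¬ (deriv (fun t => f t y) x = 0 ∧ deriv (fun t => f x t) y = 0) := by
    intro x y ⟨h1, h2⟩
    -- compute the x-derivative
    have e1 : (fun t => f t y) = fun t =>
        t + (1 / M) * t ^ (n + 2) * y ^ (n + 2) + (2 * a / (M + 1)) * t ^ (n + 3) * y ^ (n + 3)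
          + (1 / (M + 2)) * t ^ (n + 4) * y ^ (n + 4) := by
      funext t
      rw [hf t y, hcast]
    have e2 : (fun t => f x t) = fun t =>
        x + ((1 / M) * x ^ (n + 2)) * t ^ (n + 2) + ((2 * a / (M + 1)) * x ^ (n + 3)) * t ^ (n + 3)
          + ((1 / (M + 2)) * x ^ (n + 4)) * t ^ (n + 4) := by
      funext t
      rw [hf x t, hcast]
    have d1 : HasDerivAt (fun t : ℝ =>
        t + (1 / M) * t ^ (n + 2) * y ^ (n + 2) + (2 * a / (M + 1)) * t ^ (n + 3) * y ^ (n + 3)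
          + (1 / (M + 2)) * t ^ (n + 4) * y ^ (n + 4))
        (1 + (1 / M) * (((n + 2 : ℕ) : ℝ) * x ^ (n + 1)) * y ^ (n + 2)
          + (2 * a / (M + 1)) * (((n + 3 : ℕ) : ℝ) * x ^ (n + 2)) * y ^ (n + 3)
          + (1 / (M + 2)) * (((n + 4 : ℕ) : ℝ) * x ^ (n + 3)) * y ^ (n + 4)) x := by
      exact (((hasDerivAt_id x).add
        (((hasDerivAt_pow (n + 2) x).const_mul (1 / M)).mul_const _)).add
        (((hasDerivAt_pow (n + 3) x).const_mul (2 * a / (M + 1))).mul_const _)).add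
        (((hasDerivAt_pow (n + 4) x).const_mul (1 / (M + 2))).mul_const _)
    have d2 : HasDerivAt (fun t : ℝ =>
        x + ((1 / M) * x ^ (n + 2)) * t ^ (n + 2) + ((2 * a / (M + 1)) * x ^ (n + 3)) * t ^ (n + 3)
          + ((1 / (M + 2)) * x ^ (n + 4)) * t ^ (n + 4))
        (0 + ((1 / M) * x ^ (n + 2)) * (((n + 2 : ℕ) : ℝ) * y ^ (n + 1))
          + ((2 * a / (M + 1)) * x ^ (n + 3)) * (((n + 3 : ℕ) : ℝ) * y ^ (n + 2))
          + ((1 / (M + 2)) * x ^ (n + 4)) * (((n + 4 : ℕ) : ℝ) * y ^ (n + 3))) y := by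
      exact (((hasDerivAt_const y x).add
        ((hasDerivAt_pow (n + 2) y).const_mul _)).add
        ((hasDerivAt_pow (n + 3) y).const_mul _)).add
        ((hasDerivAt_pow (n + 4) y).const_mul _)
    rw [e1, d1.deriv] at h1
    rw [e2, d2.deriv] at h2
    have c2 : ((n + 2 : ℕ) : ℝ) = M := hcast
    have c3 : ((n + 3 : ℕ) : ℝ) = M + 1 := by push_cast [hM]; ring
    have c4 : ((n + 4 : ℕ) : ℝ) = M + 2 := by push_cast [hM]; ring
    rw [c2, c3, c4] at h1 h2
    have h1' : 1 + x ^ (n + 1) * y ^ (n + 2) + 2 * a * x ^ (n + 2) * y ^ (n + 3)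
        + x ^ (n + 3) * y ^ (n + 4) = 0 := by
      rw [← h1]; field_simp
    have h2' : x ^ (n + 2) * y ^ (n + 1) + 2 * a * x ^ (n + 3) * y ^ (n + 2)
        + x ^ (n + 4) * y ^ (n + 3) = 0 := by
      rw [← h2]; field_simp; ring
    have hx : x = 0 := by
      have : y * (x ^ (n + 2) * y ^ (n + 1) + 2 * a * x ^ (n + 3) * y ^ (n + 2)
            + x ^ (n + 4) * y ^ (n + 3))
          - x * (1 + x ^ (n + 1) * y ^ (n + 2) + 2 * a * x ^ (n + 2) * y ^ (n + 3)
            + x ^ (n + 3) * y ^ (n + 4)) = -x := by ring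
      rw [h1', h2'] at this
      linarith
    rw [hx] at h1'
    simp at h1'
  refine ⟨key, ?_⟩
  ext c
  simp only [Set.mem_setOf_eq, Set.mem_empty_iff_false, iff_false]
  rintro ⟨x, y, h1, h2, -⟩
  exact key x y ⟨h1, h2⟩
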